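/- The objective function H(s) = ∫_F R(x)·P(x,s) dx decomposes as H(s) = H_i(s) + H̃(s̄_i), where H_i(s) = ∫_{V(s_i)} R(x)·Φ_i(x)·p_i(x,s_i) dx depends on s_i, and H̃(s̄_i) = ∫_F R(x)·(1 - ∏_{k≠i}(1 - p̂_k(x,s_k))) dx is independent of s_i. -/

import Mathlib

/-!
Splitting off the factor of node `i` from the miss probability gives, pointwise,
`1 - ∏ₖ (1 - p̂ₖ) = p̂ᵢ ∏_{k ≠ i} (1 - p̂ₖ) + (1 - ∏_{k ≠ i} (1 - p̂ₖ))`.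
The first term vanishes outside `V(sᵢ)`, and on `V(sᵢ)` every node outside `Bᵢ ∪ {i}` has
`p̂ₖ = 0`, so there the product over `k ≠ i` reduces to `Φᵢ`.
-/

open MeasureTheory Finset

theorem one_sub_prod_one_sub_eq_mul_prod_erase_add {ι R : Type*} [DecidableEq ι] [CommRing R]
    {s : Finset ι} {i : ι} (hi : i ∈ s) (f : ι → R) :
    1 - ∏ k ∈ s, (1 - f k) =
      f i * ∏ k ∈ s.erase i, (1 - f k) + (1 - ∏ k ∈ s.erase i, (1 - f k)) := by
  rw [← mul_prod_erase s _ hi]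
  ring

theorem prod_univ_erase_eq_prod_of_eq_one {ι M : Type*} [Fintype ι] [DecidableEq ι]
    [CommMonoid M] {i : ι} {B : Finset ι} (hiB : i ∉ B) {f : ι → M}
    (hf : ∀ k ∈ univ \ insert i B, f k = 1) :
    ∏ k ∈ univ.erase i, f k = ∏ k ∈ B, f k := by
  refine (prod_subset (fun k hk => mem_erase.2 ⟨ne_of_mem_of_not_mem hk hiB, mem_univ k⟩)
    fun k hk hkB => hf k ?_).symm
  simp only [mem_sdiff, mem_univ, mem_insert, true_and, not_or]
  exact ⟨(mem_erase.1 hk).1, hkB⟩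

theorem integral_eq_add_of_eq_add {α E : Type*} [MeasurableSpace α] [NormedAddCommGroup E]
    [NormedSpace ℝ E] {μ : Measure α} {f g h : α → E} (hfgh : ∀ x, f x = g x + h x)
    (hf : Integrable f μ) (hh : Integrable h μ) :
    ∫ x, f x ∂μ = ∫ x, g x ∂μ + ∫ x, h x ∂μ := by
  have hg : (fun x => g x) = fun x => f x - h x :=
    funext fun x => eq_sub_of_add_eq (hfgh x).symm
  rw [hg, integral_sub hf hh, sub_add_cancel]

theorem stmt_1_general (N : ℕ) (i : Fin N)
    (F V : Set (ℝ × ℝ)) (hF : MeasurableSet F) (hV : MeasurableSet V) (hVF : V ⊆ F)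
    (R : ℝ × ℝ → ℝ)
    (phat : Fin N → (ℝ × ℝ) → ℝ)
    (pi : (ℝ × ℝ) → ℝ)
    (hvis : ∀ x ∈ V, phat i x = pi x)
    (hinv : ∀ x ∈ F \ V, phat i x = 0)
    (B C : Finset (Fin N)) (hiB : i ∉ B) (hC : C = Finset.univ \ insert i B)
    (hCzero : ∀ x ∈ V, ∀ j ∈ C, phat j x = 0)
    (hint1 : IntegrableOn (fun x => R x * (1 - ∏ k, (1 - phat k x))) F)
    (hint3 : IntegrableOn
      (fun x => R x * (1 - ∏ k ∈ Finset.univ.erase i, (1 - phat k x))) F) :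
    ∫ x in F, R x * (1 - ∏ k, (1 - phat k x)) =
      (∫ x in V, R x * (∏ k ∈ B, (1 - phat k x)) * pi x) +
      ∫ x in F, R x * (1 - ∏ k ∈ Finset.univ.erase i, (1 - phat k x)) := by
  set g : ℝ × ℝ → ℝ := fun x => R x * (phat i x * ∏ k ∈ univ.erase i, (1 - phat k x))
  have hsplit : ∀ x, R x * (1 - ∏ k, (1 - phat k x)) =
      g x + R x * (1 - ∏ k ∈ univ.erase i, (1 - phat k x)) := fun x => by
    rw [one_sub_prod_one_sub_eq_mul_prod_erase_add (mem_univ i), mul_add]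
  have hprod : ∀ x ∈ V, ∏ k ∈ univ.erase i, (1 - phat k x) = ∏ k ∈ B, (1 - phat k x) :=
    fun x hx => prod_univ_erase_eq_prod_of_eq_one hiB fun k hk => by
      rw [hCzero x hx k (hC ▸ hk), sub_zero]
  calc ∫ x in F, R x * (1 - ∏ k, (1 - phat k x))
      = (∫ x in F, g x) + ∫ x in F, R x * (1 - ∏ k ∈ univ.erase i, (1 - phat k x)) :=
        integral_eq_add_of_eq_add hsplit hint1 hint3
    _ = (∫ x in V, g x) + ∫ x in F, R x * (1 - ∏ k ∈ univ.erase i, (1 - phat k x)) := by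
        rw [setIntegral_eq_of_subset_of_forall_sdiff_eq_zero hF hVF fun x hx => by
          simp only [g, hinv x hx, zero_mul, mul_zero]]
    _ = _ := by
        congr 1
        refine setIntegral_congr_fun hV fun x hx => ?_
        simp only [g, hprod x hx, hvis x hx]
        ring

/-- H(s) = H_i(s) + H̃(s̄_i). -/
theorem stmt_1 (N : ℕ) (i : Fin N)
    (F V : Set (ℝ × ℝ)) (hF : MeasurableSet F) (hV : MeasurableSet V) (hVF : V ⊆ F)
    (R : ℝ × ℝ → ℝ) (hR : ∀ x, 0 ≤ R x)
    (phat : Fin N → (ℝ × ℝ) → ℝ) (hp : ∀ k x, phat k x ∈ Set.Icc (0:ℝ) 1)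
    (pi : (ℝ × ℝ) → ℝ)
    (hvis : ∀ x ∈ V, phat i x = pi x)
    (hinv : ∀ x ∈ F \ V, phat i x = 0)
    (B C : Finset (Fin N)) (hiB : i ∉ B) (hC : C = Finset.univ \ insert i B)
    (hCzero : ∀ x ∈ V, ∀ j ∈ C, phat j x = 0)
    (hint1 : IntegrableOn (fun x => R x * (1 - ∏ k, (1 - phat k x))) F)
    (hint2 : IntegrableOn (fun x => R x * (∏ k ∈ B, (1 - phat k x)) * pi x) V)
    (hint3 : IntegrableOn
      (fun x => R x * (1 - ∏ k ∈ Finset.univ.erase i, (1 - phat k x))) F) :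
    ∫ x in F, R x * (1 - ∏ k, (1 - phat k x)) =
      (∫ x in V, R x * (∏ k ∈ B, (1 - phat k x)) * pi x) +
      ∫ x in F, R x * (1 - ∏ k ∈ Finset.univ.erase i, (1 - phat k x)) :=
  stmt_1_general N i F V hF hV hVF R phat pi hvis hinv B C hiB hC hCzero hint1 hint3
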